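/- arXiv:2308.00957 — 6 statements merged into one kernel-verified Lean document; each statement's English description precedes it below -/
import Mathlib

section
/- Let λ ∈ [0,1], γ > 0 and ε̃ > 0 be real numbers, and set δ := max(0, 1 − λ + λγ(1 − e^{ε̃})). Then for every real number q with q ≥ γ, one has 1 − λ + λq ≤ e^{ε̃} · λq + δ. -/
/-- Per-label inequality for the (ε̃,δ)-label-DP guarantee of the resampling step of
the Cluster-DP mechanism. -/
theorem cluster_dp_per_label_ineq
    (lam γ εt : ℝ) (hlam : lam ∈ Set.Icc (0:ℝ) 1) (hγ : 0 < γ) (hεt : 0 < εt)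
    (δ : ℝ) (hδ : δ = max 0 (1 - lam + lam * γ * (1 - Real.exp εt)))
    (q : ℝ) (hq : γ ≤ q) :
    1 - lam + lam * q ≤ Real.exp εt * (lam * q) + δ := by
  obtain ⟨h0, h1⟩ := hlam
  have he : 1 ≤ Real.exp εt := by
    have := Real.exp_le_exp.mpr hεt.le
    simpa [Real.exp_zero] using Real.one_le_exp hεt.le
  have hmax : 1 - lam + lam * γ * (1 - Real.exp εt) ≤ δ := hδ ▸ le_max_right _ _
  nlinarith [mul_nonneg h0 (sub_nonneg.mpr hq), sub_nonneg.mpr he]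
end

section
/- Let n be a positive integer, γ > 0, λ ∈ [0,1], ε̃ > 0 be real numbers, and set δ := max(0, 1 − λ + λγ(1 − e^{ε̃})). Let a, b be real numbers with b ≥ γ and |a − b| ≤ 2/n. Then 1 − λ + λa ≤ e^{ε̃} · (1 + 2/(nγ)) · λb + δ. -/
theorem add_mul_le_mul_one_add_mul_add_mul_one_sub {e d γ b : ℝ} (he : 1 ≤ e) (hd : 0 ≤ d)
    (hγ : 0 ≤ γ) (hγb : γ ≤ b) :
    b + d * γ ≤ e * (1 + d) * b + γ * (1 - e) := by
  -- the slack is `(e - 1) * (b - γ) + d * (e * b - γ)`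
  have hγeb : γ ≤ e * b := hγb.trans (le_mul_of_one_le_left (hγ.trans hγb) he)
  nlinarith [mul_nonneg (sub_nonneg.2 he) (sub_nonneg.2 hγb), mul_nonneg hd (sub_nonneg.2 hγeb)]

theorem cluster_dp_Ai_Bi_key_case_general
    (n : ℕ) (γ lam εt : ℝ) (hγ : 0 < γ)
    (hlam : lam ∈ Set.Icc (0:ℝ) 1) (hεt : 0 < εt)
    (δ : ℝ) (hδ : δ = max 0 (1 - lam + lam * γ * (1 - Real.exp εt)))
    (a b : ℝ) (hb : γ ≤ b) (hab : |a - b| ≤ 2 / (n : ℝ)) :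
    1 - lam + lam * a ≤ Real.exp εt * (1 + 2 / ((n : ℝ) * γ)) * (lam * b) + δ := by
  have ha : a ≤ b + 2 / ((n : ℝ) * γ) * γ := by
    rw [div_mul_eq_mul_div, mul_div_mul_right _ _ hγ.ne']
    linarith [(abs_le.mp hab).2]
  have ha_le := ha.trans <| add_mul_le_mul_one_add_mul_add_mul_one_sub
    (Real.one_le_exp hεt.le) (by positivity) hγ.le hb
  have hδ' : 1 - lam + lam * γ * (1 - Real.exp εt) ≤ δ := hδ ▸ le_max_right _ _
  linarith [mul_le_mul_of_nonneg_left ha_le hlam.1]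

/-- Key case of the A_i vs B_i comparison lemma in the privacy proof of the
Cluster-DP mechanism. -/
theorem cluster_dp_Ai_Bi_key_case
    (n : ℕ) (hn : 0 < n) (γ lam εt : ℝ) (hγ : 0 < γ)
    (hlam : lam ∈ Set.Icc (0:ℝ) 1) (hεt : 0 < εt)
    (δ : ℝ) (hδ : δ = max 0 (1 - lam + lam * γ * (1 - Real.exp εt)))
    (a b : ℝ) (hb : γ ≤ b) (hab : |a - b| ≤ 2 / (n : ℝ)) :
    1 - lam + lam * a ≤ Real.exp εt * (1 + 2 / ((n : ℝ) * γ)) * (lam * b) + δ :=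
  cluster_dp_Ai_Bi_key_case_general n γ lam εt hγ hlam hεt δ hδ a b hb hab
end

section
/- Fix a finite set 𝒴 with K := |𝒴| ≥ 2 elements, reals γ ∈ (0, 1/K], a positive integer n, and a noise function w : 𝒴 → ℝ. Define the clipping function f_γ(x) := max(γ, min(1, x)). Let p̂, p̂' : 𝒴 → ℝ be two functions such that there exist distinct ℓ, ℓ' ∈ 𝒴 with p̂(ℓ) = p̂'(ℓ) + 1/n, p̂(ℓ') = p̂'(ℓ') − 1/n, and p̂(y) = p̂'(y) for all y ∉ {ℓ, ℓ'}. Define q(y) := f_γ(p̂(y) + w(y)) and q'(y) := f_γ(p̂'(y) + w(y)) for each y ∈ 𝒴, and Δ := 1 − Σ_y q(y), Δ' := 1 − Σ_y q'(y). Define ζ_y := q(y) − γ if Σ_y q(y) > 1 and ζ_y := 1 − q(y) otherwise, and set q̃(y) := q(y) + (ζ_y / Σ_{y'} ζ_{y'}) · Δ; define q̃'(y) analogously from q' and Δ'. Then for every y ∈ 𝒴, |q̃(y) − q̃'(y)| ≤ 2/n. -/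
/-!
Clipping to `[γ, 1]` is 1-Lipschitz, so the clipped vectors `q, q'` are at `ℓ¹` distance at most
`2/n`; it remains to see that the renormalization step maps `ℓ¹`-close inputs to `ℓ∞`-close
outputs. If both `∑ q` and `∑ q'` lie on the same side of `1`, then with the weights `ζ` the
renormalized value is `α + (1 - Kα) · ζ y / ∑ ζ` for `α = γ` resp. `α = 1`, and the normalization
`ζ ↦ ζ y / ∑ ζ` moves by at most `‖ζ - ζ'‖₁ / ∑ ζ'`, while `|1 - Kα| ≤ ∑ ζ'`. If they lie on
opposite sides, one correction is a fraction of a deficit and the other a fraction of a surplus,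
so the difference is squeezed between `q y - q' y` and `(q y - q' y) - (∑ q - ∑ q')`.
-/

open Finset

theorem abs_clip_sub_clip_le (γ x x' : ℝ) :
    |max γ (min 1 x) - max γ (min 1 x')| ≤ |x - x'| := by
  rw [max_comm γ, max_comm γ]
  refine (abs_max_sub_max_le_abs _ _ _).trans ?_
  simpa using abs_min_sub_min_le_max 1 x 1 x'

theorem abs_div_add_sub_div_add_le {a b a' b' : ℝ} (ha : 0 ≤ a) (hb : 0 ≤ b)
    (hab : 0 < a + b) (hab' : 0 < a' + b') :
    |a / (a + b) - a' / (a' + b')| ≤ (|a - a'| + |b - b'|) / (a' + b') := by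
  have key : a / (a + b) - a' / (a' + b') =
      (a * (b' - b) + b * (a - a')) / ((a + b) * (a' + b')) := by
    field_simp
    ring
  have hnum : |a * (b' - b) + b * (a - a')| ≤ (a + b) * (|a - a'| + |b - b'|) :=
    calc |a * (b' - b) + b * (a - a')| ≤ a * |b - b'| + b * |a - a'| := by
          refine (abs_add_le _ _).trans_eq ?_
          rw [abs_mul, abs_mul, abs_of_nonneg ha, abs_of_nonneg hb, abs_sub_comm b']
      _ ≤ (a + b) * (|a - a'| + |b - b'|) := by
          nlinarith [abs_nonneg (a - a'), abs_nonneg (b - b')]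
  rw [key, abs_div, abs_of_pos (mul_pos hab hab'), div_le_div_iff₀ (mul_pos hab hab') hab']
  nlinarith

section Renormalization

variable {Y : Type*} [Fintype Y]

/-- The weights `ζ` of the Cluster-DP renormalization: the surplus is removed in proportion to
`q - γ`, a deficit is filled in proportion to `1 - q`. -/
noncomputable def renormWeight (γ : ℝ) (q : Y → ℝ) (z : Y) : ℝ :=
  if 1 < ∑ x, q x then q z - γ else 1 - q z

noncomputable def renormalize (γ : ℝ) (q : Y → ℝ) (y : Y) : ℝ :=
  q y + renormWeight γ q y / (∑ z, renormWeight γ q z) * (1 - ∑ z, q z)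

theorem abs_sub_add_abs_sum_erase_sub_le [DecidableEq Y] (u u' : Y → ℝ) (y : Y) :
    |u y - u' y| + |∑ z ∈ univ.erase y, u z - ∑ z ∈ univ.erase y, u' z| ≤
      ∑ z, |u z - u' z| := by
  rw [← add_sum_erase _ _ (mem_univ y), ← sum_sub_distrib]
  gcongr
  exact abs_sum_le_sum_abs _ _

theorem abs_div_sum_sub_div_sum_le {u u' : Y → ℝ} (hu : ∀ z, 0 ≤ u z)
    (hU : 0 < ∑ z, u z) (hU' : 0 < ∑ z, u' z) (y : Y) :
    |u y / ∑ z, u z - u' y / ∑ z, u' z| ≤ (∑ z, |u z - u' z|) / ∑ z, u' z := by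
  classical
  have hsplit (v : Y → ℝ) : ∑ z, v z = v y + ∑ z ∈ univ.erase y, v z :=
    (add_sum_erase _ _ (mem_univ y)).symm
  rw [hsplit u] at hU
  rw [hsplit u'] at hU'
  rw [hsplit u, hsplit u']
  refine (abs_div_add_sub_div_add_le (hu y) (sum_nonneg fun z _ => hu z) hU hU').trans ?_
  gcongr
  exact abs_sub_add_abs_sum_erase_sub_le u u' y

theorem add_div_sum_mul_one_sub_sum_eq {q ζ : Y → ℝ} (α s : ℝ) (hq : ∀ z, q z = α + s * ζ z)
    (hζ : ∑ z, ζ z ≠ 0) (y : Y) :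
    q y + ζ y / (∑ z, ζ z) * (1 - ∑ z, q z) =
      α + (1 - Fintype.card Y * α) * (ζ y / ∑ z, ζ z) := by
  have hsum : ∑ z, q z = Fintype.card Y * α + s * ∑ z, ζ z := by
    simp only [hq, sum_add_distrib, ← mul_sum, sum_const, card_univ, nsmul_eq_mul]
  rw [hsum, hq y]
  field_simp
  ring

theorem abs_renorm_sub_le_of_same_side {q q' ζ ζ' : Y → ℝ} (α s : ℝ) (hs : |s| = 1)
    (hq : ∀ z, q z = α + s * ζ z) (hq' : ∀ z, q' z = α + s * ζ' z)
    (hζ : ∀ z, 0 ≤ ζ z) (hζsum : 0 < ∑ z, ζ z)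
    (hζsum' : |1 - Fintype.card Y * α| ≤ ∑ z, ζ' z) (hζsum'_pos : 0 < ∑ z, ζ' z) (y : Y) :
    |q y + ζ y / (∑ z, ζ z) * (1 - ∑ z, q z) - (q' y + ζ' y / (∑ z, ζ' z) * (1 - ∑ z, q' z))|
      ≤ ∑ z, |q z - q' z| := by
  have hdist : ∑ z, |q z - q' z| = ∑ z, |ζ z - ζ' z| := by
    refine sum_congr rfl fun z _ => ?_
    rw [hq, hq', add_sub_add_left_eq_sub, ← mul_sub, abs_mul, hs, one_mul]
  rw [add_div_sum_mul_one_sub_sum_eq α s hq hζsum.ne', add_div_sum_mul_one_sub_sum_eq α s hq'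
    hζsum'_pos.ne', add_sub_add_left_eq_sub, ← mul_sub, abs_mul, hdist]
  calc |1 - Fintype.card Y * α| * |ζ y / ∑ z, ζ z - ζ' y / ∑ z, ζ' z|
      ≤ (∑ z, ζ' z) * ((∑ z, |ζ z - ζ' z|) / ∑ z, ζ' z) := by
        gcongr
        exact abs_div_sum_sub_div_sum_le hζ hζsum hζsum'_pos y
    _ = ∑ z, |ζ z - ζ' z| := mul_div_cancel₀ _ hζsum'_pos.ne'

theorem abs_renorm_sub_le_of_opposite_sides {q q' : Y → ℝ} {t t' : ℝ}
    (ht : t ∈ Set.Icc 0 1) (ht' : t' ∈ Set.Icc 0 1)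
    (hsurplus : 1 ≤ ∑ z, q z) (hdeficit : ∑ z, q' z ≤ 1) (y : Y) :
    |q y + t * (1 - ∑ z, q z) - (q' y + t' * (1 - ∑ z, q' z))| ≤ ∑ z, |q z - q' z| := by
  classical
  have hbound := abs_sub_add_abs_sum_erase_sub_le q q' y
  rw [← add_sum_erase _ q (mem_univ y)] at hsurplus ⊢
  rw [← add_sum_erase _ q' (mem_univ y)] at hdeficit ⊢
  obtain ⟨ht0, ht1⟩ := ht
  obtain ⟨ht0', ht1'⟩ := ht'
  rw [abs_le]
  constructor <;> nlinarith [le_abs_self (q y - q' y), neg_abs_le (q y - q' y),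
    le_abs_self (∑ z ∈ univ.erase y, q z - ∑ z ∈ univ.erase y, q' z),
    neg_abs_le (∑ z ∈ univ.erase y, q z - ∑ z ∈ univ.erase y, q' z)]

theorem div_sum_mem_Icc {u : Y → ℝ} (hu : ∀ z, 0 ≤ u z) (y : Y) :
    u y / ∑ z, u z ∈ Set.Icc 0 1 :=
  ⟨div_nonneg (hu y) (sum_nonneg fun z _ => hu z),
    div_le_one_of_le₀ (single_le_sum (fun z _ => hu z) (mem_univ y))
      (sum_nonneg fun z _ => hu z)⟩

variable {γ : ℝ} {q q' : Y → ℝ}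

theorem renormWeight_of_surplus (h : 1 < ∑ z, q z) :
    renormWeight γ q = fun z => q z - γ :=
  funext fun _ => if_pos h

theorem renormWeight_of_deficit (h : ∑ z, q z ≤ 1) :
    renormWeight γ q = fun z => 1 - q z :=
  funext fun _ => if_neg h.not_gt

theorem abs_renormalize_sub_le_of_surplus (hKγ : Fintype.card Y * γ ≤ 1)
    (hq : ∀ z, q z ∈ Set.Icc γ 1) (h : 1 < ∑ z, q z) (h' : 1 < ∑ z, q' z) (y : Y) :
    |renormalize γ q y - renormalize γ q' y| ≤ ∑ z, |q z - q' z| := by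
  have hsum (p : Y → ℝ) : ∑ z, (p z - γ) = ∑ z, p z - Fintype.card Y * γ := by
    simp [sum_sub_distrib]
  simp only [renormalize, renormWeight_of_surplus h, renormWeight_of_surplus h']
  refine abs_renorm_sub_le_of_same_side (ζ := fun z => q z - γ) (ζ' := fun z => q' z - γ)
    γ 1 abs_one (fun z => by ring) (fun z => by ring) (fun z => sub_nonneg.2 (hq z).1)
    ?_ ?_ ?_ y <;> rw [hsum]
  · linarith
  · rw [abs_of_nonneg (sub_nonneg.2 hKγ)]
    linarith
  · linarith

theorem abs_renormalize_sub_le_of_deficit (hK : 2 ≤ Fintype.card Y)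
    (hq : ∀ z, q z ∈ Set.Icc γ 1) (h : ∑ z, q z ≤ 1) (h' : ∑ z, q' z ≤ 1) (y : Y) :
    |renormalize γ q y - renormalize γ q' y| ≤ ∑ z, |q z - q' z| := by
  have hK' : (2 : ℝ) ≤ Fintype.card Y := by exact_mod_cast hK
  have hsum (p : Y → ℝ) : ∑ z, (1 - p z) = Fintype.card Y - ∑ z, p z := by
    simp [sum_sub_distrib]
  simp only [renormalize, renormWeight_of_deficit h, renormWeight_of_deficit h']
  refine abs_renorm_sub_le_of_same_side (ζ := fun z => 1 - q z) (ζ' := fun z => 1 - q' z)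
    1 (-1) (by simp) (fun z => by ring) (fun z => by ring) (fun z => sub_nonneg.2 (hq z).2)
    ?_ ?_ ?_ y <;> rw [hsum]
  · linarith
  · rw [mul_one, abs_of_nonpos (by linarith)]
    linarith
  · linarith

theorem abs_renormalize_sub_le_of_surplus_of_deficit (hq : ∀ z, q z ∈ Set.Icc γ 1)
    (hq' : ∀ z, q' z ∈ Set.Icc γ 1) (h : 1 < ∑ z, q z) (h' : ∑ z, q' z ≤ 1) (y : Y) :
    |renormalize γ q y - renormalize γ q' y| ≤ ∑ z, |q z - q' z| := by
  simp only [renormalize, renormWeight_of_surplus h, renormWeight_of_deficit h']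
  exact abs_renorm_sub_le_of_opposite_sides
    (div_sum_mem_Icc (fun z => sub_nonneg.2 (hq z).1) y)
    (div_sum_mem_Icc (fun z => sub_nonneg.2 (hq' z).2) y) h.le h' y

theorem abs_renormalize_sub_le (hK : 2 ≤ Fintype.card Y) (hKγ : Fintype.card Y * γ ≤ 1)
    (hq : ∀ z, q z ∈ Set.Icc γ 1) (hq' : ∀ z, q' z ∈ Set.Icc γ 1) (y : Y) :
    |renormalize γ q y - renormalize γ q' y| ≤ ∑ z, |q z - q' z| := by
  rcases lt_or_ge 1 (∑ z, q z) with h | h <;> rcases lt_or_ge 1 (∑ z, q' z) with h' | h'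
  · exact abs_renormalize_sub_le_of_surplus hKγ hq h h' y
  · exact abs_renormalize_sub_le_of_surplus_of_deficit hq hq' h h' y
  · rw [abs_sub_comm]
    simp only [abs_sub_comm (q _)]
    exact abs_renormalize_sub_le_of_surplus_of_deficit hq' hq h' h y
  · exact abs_renormalize_sub_le_of_deficit hK hq h h' y

end Renormalization

theorem sum_abs_sub_eq_of_neighbors {Y : Type*} [Fintype Y] {p p' : Y → ℝ} {ℓ ℓ' : Y}
    (hne : ℓ ≠ ℓ') {d : ℝ} (h1 : p ℓ = p' ℓ + d) (h2 : p ℓ' = p' ℓ' - d)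
    (h3 : ∀ y, y ≠ ℓ → y ≠ ℓ' → p y = p' y) :
    ∑ y, |p y - p' y| = 2 * |d| := by
  rw [Fintype.sum_eq_add ℓ ℓ' hne fun y hy => by rw [h3 y hy.1 hy.2, sub_self, abs_zero], h1, h2]
  rw [add_sub_cancel_left, sub_sub_cancel_left, abs_neg]
  ring

theorem cluster_dp_qtilde_stability_general
    {Y : Type*} [Fintype Y]
    (hK : 2 ≤ Fintype.card Y)
    (γ : ℝ) (hγle : γ ≤ 1 / (Fintype.card Y : ℝ))
    (n : ℕ) (hn : 0 < n)
    (w phat phat' : Y → ℝ)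
    (ℓ ℓ' : Y) (hne : ℓ ≠ ℓ')
    (h1 : phat ℓ = phat' ℓ + 1 / (n : ℝ))
    (h2 : phat ℓ' = phat' ℓ' - 1 / (n : ℝ))
    (h3 : ∀ y, y ≠ ℓ → y ≠ ℓ' → phat y = phat' y)
    (q q' : Y → ℝ)
    (hq : ∀ y, q y = max γ (min 1 (phat y + w y)))
    (hq' : ∀ y, q' y = max γ (min 1 (phat' y + w y)))
    (Δ Δ' : ℝ)
    (hΔ : Δ = 1 - ∑ y, q y) (hΔ' : Δ' = 1 - ∑ y, q' y)
    (ζ ζ' : Y → ℝ)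
    (hζ : ∀ y, ζ y = if 1 < ∑ z, q z then q y - γ else 1 - q y)
    (hζ' : ∀ y, ζ' y = if 1 < ∑ z, q' z then q' y - γ else 1 - q' y)
    (qt qt' : Y → ℝ)
    (hqt : ∀ y, qt y = q y + (ζ y / ∑ z, ζ z) * Δ)
    (hqt' : ∀ y, qt' y = q' y + (ζ' y / ∑ z, ζ' z) * Δ') :
    ∀ y, |qt y - qt' y| ≤ 2 / (n : ℝ) := by
  intro y
  have hK' : (2 : ℝ) ≤ Fintype.card Y := by exact_mod_cast hK
  have hKγ : Fintype.card Y * γ ≤ 1 := by rwa [le_div_iff₀ (by linarith), mul_comm] at hγle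
  have hγ1 : γ ≤ 1 := by nlinarith
  have clip_mem (x : ℝ) : max γ (min 1 x) ∈ Set.Icc γ 1 :=
    ⟨le_max_left _ _, max_le hγ1 (min_le_left _ _)⟩
  have hζ_eq : ζ = renormWeight γ q := funext hζ
  have hζ'_eq : ζ' = renormWeight γ q' := funext hζ'
  calc |qt y - qt' y| = |renormalize γ q y - renormalize γ q' y| := by
        rw [hqt, hqt', hΔ, hΔ', hζ_eq, hζ'_eq, renormalize, renormalize]
    _ ≤ ∑ z, |q z - q' z| :=
        abs_renormalize_sub_le hK hKγ (fun z => hq z ▸ clip_mem _) (fun z => hq' z ▸ clip_mem _) y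
    _ ≤ ∑ z, |phat z - phat' z| := sum_le_sum fun z _ => by
        rw [hq, hq', ← add_sub_add_right_eq_sub (phat z) _ (w z)]
        exact abs_clip_sub_clip_le γ _ _
    _ = 2 / n := by
        have hn' : (0 : ℝ) < 1 / n := one_div_pos.2 (by exact_mod_cast hn)
        rw [sum_abs_sub_eq_of_neighbors hne h1 h2 h3, abs_of_pos hn']
        ring

/-- Stability of the noisy, truncated, renormalized empirical label distribution of the
Cluster-DP mechanism under changing one of the `n` labels:
`|q̃(y) − q̃'(y)| ≤ 2/n` for all labels `y`. -/
theorem cluster_dp_qtilde_stability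
    {Y : Type*} [Fintype Y] [DecidableEq Y]
    (hK : 2 ≤ Fintype.card Y)
    (γ : ℝ) (hγpos : 0 < γ) (hγle : γ ≤ 1 / (Fintype.card Y : ℝ))
    (n : ℕ) (hn : 0 < n)
    (w phat phat' : Y → ℝ)
    (ℓ ℓ' : Y) (hne : ℓ ≠ ℓ')
    (h1 : phat ℓ = phat' ℓ + 1 / (n : ℝ))
    (h2 : phat ℓ' = phat' ℓ' - 1 / (n : ℝ))
    (h3 : ∀ y, y ≠ ℓ → y ≠ ℓ' → phat y = phat' y)
    (q q' : Y → ℝ)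
    (hq : ∀ y, q y = max γ (min 1 (phat y + w y)))
    (hq' : ∀ y, q' y = max γ (min 1 (phat' y + w y)))
    (Δ Δ' : ℝ)
    (hΔ : Δ = 1 - ∑ y, q y) (hΔ' : Δ' = 1 - ∑ y, q' y)
    (ζ ζ' : Y → ℝ)
    (hζ : ∀ y, ζ y = if 1 < ∑ z, q z then q y - γ else 1 - q y)
    (hζ' : ∀ y, ζ' y = if 1 < ∑ z, q' z then q' y - γ else 1 - q' y)
    (qt qt' : Y → ℝ)
    (hqt : ∀ y, qt y = q y + (ζ y / ∑ z, ζ z) * Δ)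
    (hqt' : ∀ y, qt' y = q' y + (ζ' y / ∑ z, ζ' z) * Δ') :
    ∀ y, |qt y - qt' y| ≤ 2 / (n : ℝ) :=
  cluster_dp_qtilde_stability_general hK γ hγle n hn w phat phat' ℓ ℓ' hne h1 h2 h3 q q' hq hq' Δ Δ'
    hΔ hΔ' ζ ζ' hζ hζ' qt qt' hqt hqt'
end

section
/- Fix a finite set 𝒴, reals γ ∈ (0, 1], a positive integer n, and a function w : 𝒴 → ℝ. Define f_γ(x) := max(γ, min(1, x)). Let p̂, p̂' : 𝒴 → ℝ be such that there exist distinct ℓ, ℓ' ∈ 𝒴 with p̂(ℓ) = p̂'(ℓ) + 1/n, p̂(ℓ') = p̂'(ℓ') − 1/n, and p̂(y) = p̂'(y) for all y ∉ {ℓ, ℓ'}. Define q(y) := f_γ(p̂(y) + w(y)), q'(y) := f_γ(p̂'(y) + w(y)), Δ := 1 − Σ_{y∈𝒴} q(y) and Δ' := 1 − Σ_{y∈𝒴} q'(y). Then |Δ − Δ'| ≤ 1/n. -/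
open Finset

/-- Stability of the normalization deficit of the clipped noisy empirical label
distribution under changing one of `n` labels: `|Δ − Δ'| ≤ 1/n`. -/
theorem cluster_dp_deficit_stability
    {Y : Type*} [Fintype Y] [DecidableEq Y]
    (γ : ℝ) (hγpos : 0 < γ) (hγle : γ ≤ 1)
    (n : ℕ) (hn : 0 < n)
    (w phat phat' : Y → ℝ)
    (ℓ ℓ' : Y) (hne : ℓ ≠ ℓ')
    (h1 : phat ℓ = phat' ℓ + 1 / (n : ℝ))
    (h2 : phat ℓ' = phat' ℓ' - 1 / (n : ℝ))
    (h3 : ∀ y, y ≠ ℓ → y ≠ ℓ' → phat y = phat' y)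
    (q q' : Y → ℝ)
    (hq : ∀ y, q y = max γ (min 1 (phat y + w y)))
    (hq' : ∀ y, q' y = max γ (min 1 (phat' y + w y)))
    (Δ Δ' : ℝ)
    (hΔ : Δ = 1 - ∑ y, q y) (hΔ' : Δ' = 1 - ∑ y, q' y) :
    |Δ - Δ'| ≤ 1 / (n : ℝ) := by

  set g : ℝ → ℝ := fun x => max γ (min 1 x) with hg
  have hmono : Monotone g := fun a b hab =>
    max_le_max le_rfl (min_le_min le_rfl hab)
  have hlip : ∀ a b : ℝ, |g a - g b| ≤ |a - b| := by
    intro a b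
    have h1 : |min 1 a - min 1 b| ≤ |a - b| := by
      have := abs_min_sub_min_le_max 1 a 1 b
      simpa using this
    have h2 := abs_max_sub_max_le_max γ (min 1 a) γ (min 1 b)
    simp only [sub_self, abs_zero] at h2
    calc |g a - g b| ≤ max 0 |min 1 a - min 1 b| := h2
      _ = |min 1 a - min 1 b| := max_eq_right (abs_nonneg _)
      _ ≤ |a - b| := h1
  have hc : (0:ℝ) < 1 / (n:ℝ) := by positivity
  have ha1 : q ℓ - q' ℓ ∈ Set.Icc 0 (1 / (n:ℝ)) := by
    rw [hq, hq', h1]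
    constructor
    · have := hmono (a := phat' ℓ + w ℓ) (b := phat' ℓ + 1/(n:ℝ) + w ℓ) (by linarith)
      simpa [g] using sub_nonneg.2 this
    · have := hlip (phat' ℓ + 1/(n:ℝ) + w ℓ) (phat' ℓ + w ℓ)
      have h' : |phat' ℓ + 1/(n:ℝ) + w ℓ - (phat' ℓ + w ℓ)| = 1/(n:ℝ) := by
        rw [show phat' ℓ + 1/(n:ℝ) + w ℓ - (phat' ℓ + w ℓ) = 1/(n:ℝ) by ring,
          abs_of_pos hc]
      rw [h'] at this
      calc max γ (min 1 (phat' ℓ + 1/(n:ℝ) + w ℓ)) - max γ (min 1 (phat' ℓ + w ℓ))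
          ≤ |g (phat' ℓ + 1/(n:ℝ) + w ℓ) - g (phat' ℓ + w ℓ)| := le_abs_self _
        _ ≤ 1/(n:ℝ) := this
  have hb1 : q' ℓ' - q ℓ' ∈ Set.Icc 0 (1 / (n:ℝ)) := by
    rw [hq, hq', h2]
    constructor
    · have := hmono (a := phat' ℓ' - 1/(n:ℝ) + w ℓ') (b := phat' ℓ' + w ℓ') (by linarith)
      simpa [g] using sub_nonneg.2 this
    · have := hlip (phat' ℓ' + w ℓ') (phat' ℓ' - 1/(n:ℝ) + w ℓ')
      have h' : |phat' ℓ' + w ℓ' - (phat' ℓ' - 1/(n:ℝ) + w ℓ')| = 1/(n:ℝ) := by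
        rw [show phat' ℓ' + w ℓ' - (phat' ℓ' - 1/(n:ℝ) + w ℓ') = 1/(n:ℝ) by ring,
          abs_of_pos hc]
      rw [h'] at this
      calc max γ (min 1 (phat' ℓ' + w ℓ')) - max γ (min 1 (phat' ℓ' - 1/(n:ℝ) + w ℓ'))
          ≤ |g (phat' ℓ' + w ℓ') - g (phat' ℓ' - 1/(n:ℝ) + w ℓ')| := le_abs_self _
        _ ≤ 1/(n:ℝ) := this
  have hsum : ∑ y, (q y - q' y) = (q ℓ - q' ℓ) + (q ℓ' - q' ℓ') := by
    rw [show q ℓ - q' ℓ + (q ℓ' - q' ℓ') = ∑ y ∈ ({ℓ, ℓ'} : Finset Y), (q y - q' y) by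
      rw [Finset.sum_pair hne]]
    symm
    apply Finset.sum_subset (Finset.subset_univ _)
    intro y _ hy
    simp only [Finset.mem_insert, Finset.mem_singleton, not_or] at hy
    rw [hq, hq', h3 y hy.1 hy.2]
    ring
  have hΔΔ : Δ - Δ' = -((q ℓ - q' ℓ) + (q ℓ' - q' ℓ')) := by
    rw [hΔ, hΔ', ← hsum, Finset.sum_sub_distrib]
    ring
  obtain ⟨ha0, hac⟩ := ha1
  obtain ⟨hb0, hbc⟩ := hb1
  rw [hΔΔ, abs_le]
  constructor <;> [linarith; linarith]
end

section
/- Fix a finite set 𝒴 with K := |𝒴| ≥ 2 elements and a positive integer n. Let q, q' : 𝒴 → ℝ satisfy 0 ≤ q(y) ≤ 1 and 0 ≤ q'(y) ≤ 1 for all y, and set Δ := 1 − Σ_y q(y), Δ' := 1 − Σ_y q'(y). Assume Δ > 0, Δ' > 0, |q(y) − q'(y)| ≤ 1/n for all y, and |Δ − Δ'| ≤ 1/n. Define q̃(y) := 1 + (1 − q(y))·(1 − K)/(Δ + K − 1) and q̃'(y) := 1 + (1 − q'(y))·(1 − K)/(Δ' + K − 1). Then for every y ∈ 𝒴, |q̃(y)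 − q̃'(y)| ≤ (1/n)·K/(K−1) ≤ 2/n. -/
open Finset

/-- Case Δ > 0, Δ' > 0 of the stability proof for the renormalization step of the
Cluster-DP mechanism. -/
theorem cluster_dp_renormalization_stability_pos_case
    {Y : Type*} [Fintype Y]
    (hK : 2 ≤ Fintype.card Y)
    (n : ℕ) (hn : 0 < n)
    (q q' : Y → ℝ)
    (hq : ∀ y, 0 ≤ q y ∧ q y ≤ 1) (hq' : ∀ y, 0 ≤ q' y ∧ q' y ≤ 1)
    (Δ Δ' : ℝ) (hΔ : Δ = 1 - ∑ y, q y) (hΔ' : Δ' = 1 - ∑ y, q' y)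
    (hΔpos : 0 < Δ) (hΔ'pos : 0 < Δ')
    (hclose : ∀ y, |q y - q' y| ≤ 1 / (n : ℝ))
    (hΔclose : |Δ - Δ'| ≤ 1 / (n : ℝ))
    (qt qt' : Y → ℝ)
    (hqt : ∀ y, qt y = 1 + (1 - q y) * (1 - (Fintype.card Y : ℝ))
        / (Δ + (Fintype.card Y : ℝ) - 1))
    (hqt' : ∀ y, qt' y = 1 + (1 - q' y) * (1 - (Fintype.card Y : ℝ))
        / (Δ' + (Fintype.card Y : ℝ) - 1)) :
    (∀ y, |qt y - qt' y| ≤ (1 / (n : ℝ)) * (Fintype.card Y : ℝ) / ((Fintype.card Y : ℝ) - 1)) ∧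
      (1 / (n : ℝ)) * (Fintype.card Y : ℝ) / ((Fintype.card Y : ℝ) - 1) ≤ 2 / (n : ℝ) := by
  set K : ℝ := (Fintype.card Y : ℝ) with hKdef
  have hK2 : (2 : ℝ) ≤ K := by rw [hKdef]; exact_mod_cast hK
  have hnpos : (0 : ℝ) < n := by exact_mod_cast hn
  have hD1 : (1 : ℝ) ≤ K - 1 := by linarith
  set D : ℝ := Δ + K - 1 with hDdef
  set D' : ℝ := Δ' + K - 1 with hD'def
  have hDge : K - 1 ≤ D := by simp [hDdef]; linarith
  have hD'ge : K - 1 ≤ D' := by simp [hD'def]; linarith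
  have hDpos : 0 < D := by linarith
  have hD'pos : 0 < D' := by linarith
  clear_value K D D'
  clear hΔ hΔ' hΔpos hΔ'pos hKdef hK hn
  constructor
  · intro y
    obtain ⟨hy0, hy1⟩ := hq y
    have hc := hclose y
    have key : qt y - qt' y =
        (1 - K) * (D * (q' y - q y) + (1 - q y) * (Δ' - Δ)) / (D * D') := by
      have h1 : (Δ + K - 1) ≠ 0 := by rw [← hDdef]; exact hDpos.ne'
      have h2 : (Δ' + K - 1) ≠ 0 := by rw [← hD'def]; exact hD'pos.ne'
      rw [hqt, hqt', hDdef, hD'def]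
      field_simp
      ring
    have hnum : |D * (q' y - q y) + (1 - q y) * (Δ' - Δ)| ≤ (D + 1) / n := by
      calc |D * (q' y - q y) + (1 - q y) * (Δ' - Δ)|
          ≤ |D * (q' y - q y)| + |(1 - q y) * (Δ' - Δ)| := abs_add_le _ _
        _ = |D| * |q' y - q y| + |1 - q y| * |Δ' - Δ| := by rw [abs_mul, abs_mul]
        _ ≤ D * (1 / n) + 1 * (1 / n) := by
            have h1 : |D| = D := abs_of_pos hDpos
            have h2 : |q' y - q y| ≤ 1 / n := by rw [abs_sub_comm]; exact hc
            have h3 : |1 - q y| ≤ 1 := by rw [abs_le]; constructor <;> linarith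
            have h4 : |Δ' - Δ| ≤ 1 / n := by rw [abs_sub_comm]; exact hΔclose
            have := mul_le_mul h3 h4 (abs_nonneg _) zero_le_one
            nlinarith [abs_nonneg (q' y - q y), abs_nonneg (Δ' - Δ), abs_nonneg (1 - q y)]
        _ = (D + 1) / n := by ring
    rw [key, abs_div, abs_mul]
    have h1K : |1 - K| = K - 1 := by rw [abs_sub_comm, abs_of_pos]; linarith
    have hDD : |D * D'| = D * D' := abs_of_pos (mul_pos hDpos hD'pos)
    rw [h1K, hDD]
    rw [div_le_div_iff₀ (mul_pos hDpos hD'pos) (by linarith : (0:ℝ) < K - 1)]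
    have hnumD : (K - 1) * |D * (q' y - q y) + (1 - q y) * (Δ' - Δ)| ≤
        (K - 1) * ((D + 1) / n) := by
      apply mul_le_mul_of_nonneg_left hnum; linarith
    have hfinal : (K - 1) * ((D + 1) / n) * (K - 1) ≤ 1 / n * K * (D * D') := by
      rw [show (K - 1) * ((D + 1) / n) * (K - 1) = ((K - 1) * (D + 1) * (K - 1)) / n by ring,
          show 1 / n * K * (D * D') = (K * (D * D')) / n by ring]
      rw [div_le_div_iff₀ hnpos hnpos]
      have h5 : (K - 1) * (D + 1) ≤ K * D := by nlinarith
      nlinarith [mul_le_mul_of_nonneg_left h5 (by linarith : (0:ℝ) ≤ K - 1),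
        mul_le_mul_of_nonneg_right hD'ge (by nlinarith : (0:ℝ) ≤ K * D), hnpos.le]
    calc (K - 1) * |D * (q' y - q y) + (1 - q y) * (Δ' - Δ)| * (K - 1)
        ≤ (K - 1) * ((D + 1) / n) * (K - 1) := by
          apply mul_le_mul_of_nonneg_right hnumD; linarith
      _ ≤ 1 / n * K * (D * D') := hfinal
  · rw [div_le_div_iff₀ (by linarith : (0:ℝ) < K - 1) hnpos]
    have : 1 / n * K * n = K := by field_simp
    nlinarith
end

section
/- Let K be a positive integer, λ ∈ [0,1) a real number, 𝟙 ∈ ℝ^K the all-ones vector, and p̂ ∈ ℝ^K a vector with Σᵢ p̂ᵢ = 1. Let 𝗒 ∈ ℝ^K, and define m̄₁ := (1/K)·Σᵢ 𝗒ᵢ, m̄₂ := (1/K)·Σᵢ 𝗒ᵢ², m₁ := Σᵢ 𝗒ᵢ·p̂ᵢ, m₂ := Σᵢ 𝗒ᵢ²·p̂ᵢ. Then (1/(1−λ)²)·𝗒ᵀ·(I − (λ/K)·𝟙𝟙ᵀ)·diag((1−λ)·p̂ + (λ/K)·𝟙)·(I − (λ/K)·𝟙𝟙ᵀ)·𝗒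 = m₂/(1−λ) + (λ·m̄₂ − λ²·m̄₁²)/(1−λ)² − (2λ·m̄₁/(1−λ))·m₁. -/
open Matrix

/-!
Both factors `I − (λ/K)𝟙𝟙ᵀ` are the same symmetric matrix `A`, so the quadratic form is
`∑ᵢ ((A𝗒)ᵢ)² dᵢ` with `(A𝗒)ᵢ = 𝗒ᵢ − λ m̄₁` and `dᵢ = (1−λ)p̂ᵢ + λ/K`. Expanding
`(𝗒ᵢ − a)²` separately against the weights `(1−λ)p̂` (mass `1−λ`) and `λ/K` (mass `λ`) turns
the sum into the moments `m₁, m₂, m̄₁, m̄₂`.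
-/

theorem Finset.sum_sub_sq_mul {ι R : Type*} [CommRing R] (s : Finset ι) (y w : ι → R) (a : R) :
    ∑ i ∈ s, (y i - a) ^ 2 * w i
      = ∑ i ∈ s, y i ^ 2 * w i - 2 * a * ∑ i ∈ s, y i * w i + a ^ 2 * ∑ i ∈ s, w i := by
  simp only [Finset.mul_sum, ← Finset.sum_sub_distrib, ← Finset.sum_add_distrib]
  exact Finset.sum_congr rfl fun i _ => by ring

namespace Matrix

variable {n R : Type*} [DecidableEq n] [CommRing R]

theorem IsSymm.dotProduct_mul_diagonal_mul_mulVec [Fintype n] {A : Matrix n n R} (hA : A.IsSymm)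
    (d y : n → R) : y ⬝ᵥ ((A * diagonal d * A) *ᵥ y) = ∑ i, (A *ᵥ y) i ^ 2 * d i := by
  rw [← mulVec_mulVec, ← mulVec_mulVec, dotProduct_mulVec, ← hA.eq, vecMul_transpose, hA.eq]
  simp only [dotProduct, mulVec_diagonal]
  exact Finset.sum_congr rfl fun i _ => by ring

theorem isSymm_one_sub_smul_vecMulVec_one (c : R) :
    ((1 : Matrix n n R) - c • vecMulVec (fun _ => 1) (fun _ => 1)).IsSymm :=
  isSymm_one.sub (IsSymm.smul (transpose_vecMulVec (fun _ => (1 : R)) fun _ => 1) c)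

theorem one_sub_smul_vecMulVec_one_mulVec [Fintype n] (c : R) (y : n → R) :
    ((1 : Matrix n n R) - c • vecMulVec (fun _ => 1) (fun _ => 1)) *ᵥ y
      = fun i => y i - c * ∑ j, y j := by
  ext i
  simp [sub_mulVec, smul_mulVec, vecMulVec_mulVec, dotProduct, Finset.mul_sum]

end Matrix

theorem uniform_prior_dp_quadratic_form_general
    (K : ℕ) (hK : 0 < K) (lam : ℝ) (hlam1 : lam < 1)
    (phat : Fin K → ℝ) (hsum : ∑ i, phat i = 1)
    (y : Fin K → ℝ)
    (mb1 mb2 m1 m2 : ℝ)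
    (hmb1 : mb1 = (1 / (K : ℝ)) * ∑ i, y i)
    (hmb2 : mb2 = (1 / (K : ℝ)) * ∑ i, y i ^ 2)
    (hm1 : m1 = ∑ i, y i * phat i)
    (hm2 : m2 = ∑ i, y i ^ 2 * phat i) :
    (1 / (1 - lam) ^ 2) *
      (y ⬝ᵥ ((((1 : Matrix (Fin K) (Fin K) ℝ)
            - (lam / (K : ℝ)) • Matrix.vecMulVec (fun _ => 1) (fun _ => 1))
          * Matrix.diagonal (fun i => (1 - lam) * phat i + lam / (K : ℝ))
          * ((1 : Matrix (Fin K) (Fin K) ℝ)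
            - (lam / (K : ℝ)) • Matrix.vecMulVec (fun _ => 1) (fun _ => 1))) *ᵥ y))
      = m2 / (1 - lam) + (lam * mb2 - lam ^ 2 * mb1 ^ 2) / (1 - lam) ^ 2
        - (2 * lam * mb1 / (1 - lam)) * m1 := by
  have hK0 : (K : ℝ) ≠ 0 := by positivity
  have hlam : 1 - lam ≠ 0 := sub_ne_zero.mpr hlam1.ne'
  have hS : ∑ i, y i = K * mb1 := by rw [hmb1]; field_simp
  have hS2 : ∑ i, y i ^ 2 = K * mb2 := by rw [hmb2]; field_simp
  rw [(isSymm_one_sub_smul_vecMulVec_one _).dotProduct_mul_diagonal_mul_mulVec,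
    one_sub_smul_vecMulVec_one_mulVec]
  simp only [mul_add, Finset.sum_add_distrib, Finset.sum_sub_sq_mul]
  simp only [mul_left_comm _ (1 - lam), ← Finset.mul_sum, ← Finset.sum_mul, Finset.sum_const,
    Finset.card_univ, Fintype.card_fin, nsmul_eq_mul, hsum, hS, hS2, ← hm1, ← hm2]
  field_simp
  ring

/-- Exact quadratic-form computation `𝗒ᵀ Q⁻¹ diag(Q p̂) Q⁻ᵀ 𝗒` for the Uniform-Prior-DP
mechanism, where `Q⁻¹ = (1/(1−λ))(I − (λ/K)𝟙𝟙ᵀ)` and `Q p̂ = (1−λ)p̂ + (λ/K)𝟙`. -/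
theorem uniform_prior_dp_quadratic_form
    (K : ℕ) (hK : 0 < K) (lam : ℝ) (hlam0 : 0 ≤ lam) (hlam1 : lam < 1)
    (phat : Fin K → ℝ) (hsum : ∑ i, phat i = 1)
    (y : Fin K → ℝ)
    (mb1 mb2 m1 m2 : ℝ)
    (hmb1 : mb1 = (1 / (K : ℝ)) * ∑ i, y i)
    (hmb2 : mb2 = (1 / (K : ℝ)) * ∑ i, y i ^ 2)
    (hm1 : m1 = ∑ i, y i * phat i)
    (hm2 : m2 = ∑ i, y i ^ 2 * phat i) :
    (1 / (1 - lam) ^ 2) *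
      (y ⬝ᵥ ((((1 : Matrix (Fin K) (Fin K) ℝ)
            - (lam / (K : ℝ)) • Matrix.vecMulVec (fun _ => 1) (fun _ => 1))
          * Matrix.diagonal (fun i => (1 - lam) * phat i + lam / (K : ℝ))
          * ((1 : Matrix (Fin K) (Fin K) ℝ)
            - (lam / (K : ℝ)) • Matrix.vecMulVec (fun _ => 1) (fun _ => 1))) *ᵥ y))
      = m2 / (1 - lam) + (lam * mb2 - lam ^ 2 * mb1 ^ 2) / (1 - lam) ^ 2
        - (2 * lam * mb1 / (1 - lam)) * m1 :=
  uniform_prior_dp_quadratic_form_general K hK lam hlam1 phat hsum y mb1 mb2 m1 m2 hmb1 hmb2 hm1 hm2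
end
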